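/- arXiv:2001.03961 — 6 statements merged into one kernel-verified Lean document; each statement's English description precedes it below -/
import Mathlib

section
/- (Crossing Lemma, e₁-increments.) With G the deterministic last-passage value over up-right paths with weights ω : ℤ² → ℝ, whenever defined: G_{o+e₂, x+e₁} − G_{o+e₂, x} ≤ G_{o, x+e₁} − G_{o, x} ≤ G_{o+e₁, x+e₁} − G_{o+e₁, x}. -/
/-- A path of length `n` from `o` to `y` in `ℤ²` with up-right steps. -/
def IsUpRightPath (o y : ℤ × ℤ) (n : ℕ) (π : ℕ → ℤ × ℤ) : Prop :=
  π 0 = o ∧ π n = y ∧ ∀ k < n, π (k + 1) - π k = (1, 0) ∨ π (k + 1) - π k = (0, 1)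

/-- The last-passage time from `o` to `y` with vertex weights `ω`:
the maximal sum of weights collected along an up-right path from `o` to `y`. -/
noncomputable def lppG (ω : ℤ × ℤ → ℝ) (o y : ℤ × ℤ) : ℝ :=
  sSup { S | ∃ (n : ℕ) (π : ℕ → ℤ × ℤ), IsUpRightPath o y n π ∧
      S = ∑ k ∈ Finset.range (n + 1), ω (π k) }

namespace CrossingAux

/-- The set whose supremum is `lppG`. -/
def lppSet (ω : ℤ × ℤ → ℝ) (o y : ℤ × ℤ) : Set ℝ :=
  { S | ∃ (n : ℕ) (π : ℕ → ℤ × ℤ), IsUpRightPath o y n π ∧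
      S = ∑ k ∈ Finset.range (n + 1), ω (π k) }

lemma lppG_def (ω : ℤ × ℤ → ℝ) (o y : ℤ × ℤ) : lppG ω o y = sSup (lppSet ω o y) := rfl

variable {ω : ℤ × ℤ → ℝ} {o y : ℤ × ℤ} {n : ℕ} {π : ℕ → ℤ × ℤ}

lemma step (h : IsUpRightPath o y n π) {k : ℕ} (hk : k < n) :
    π (k + 1) = π k + (1, 0) ∨ π (k + 1) = π k + (0, 1) := by
  rcases h.2.2 k hk with h' | h'
  · exact Or.inl (by rw [sub_eq_iff_eq_add] at h'; rw [h', add_comm])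
  · exact Or.inr (by rw [sub_eq_iff_eq_add] at h'; rw [h', add_comm])

lemma coordsum (h : IsUpRightPath o y n π) : ∀ k ≤ n,
    (π k).1 + (π k).2 = o.1 + o.2 + (k : ℤ) := by
  intro k hk
  induction k with
  | zero => simp [h.1]
  | succ k ih =>
    have hk' : k < n := hk
    have ihv := ih (le_of_lt hk')
    rcases step h hk' with hs | hs <;> rw [hs] <;> simp [Prod.fst_add, Prod.snd_add] <;>
      push_cast <;> linarith

lemma fst_step (h : IsUpRightPath o y n π) {k : ℕ} (hk : k < n) :
    (π k).1 ≤ (π (k + 1)).1 ∧ (π (k + 1)).1 ≤ (π k).1 + 1 := by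
  rcases step h hk with hs | hs <;> rw [hs] <;> simp [Prod.fst_add] <;> omega

lemma le_of_le (h : IsUpRightPath o y n π) {j k : ℕ} (hjk : j ≤ k) (hk : k ≤ n) :
    π j ≤ π k := by
  induction k with
  | zero => interval_cases j; exact le_rfl
  | succ k ih =>
    rcases Nat.eq_or_lt_of_le hjk with rfl | hjk'
    · exact le_rfl
    · refine (ih (Nat.lt_succ_iff.mp hjk') (by omega)).trans ?_
      rcases step h (Nat.lt_of_succ_le hk) with hs | hs <;> rw [hs] <;>
        exact le_add_of_nonneg_right (by simp [Prod.le_def])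

lemma mem_Icc (h : IsUpRightPath o y n π) {k : ℕ} (hk : k ≤ n) :
    π k ∈ Set.Icc o y :=
  ⟨h.1 ▸ le_of_le h (Nat.zero_le k) hk, h.2.1 ▸ le_of_le h hk le_rfl⟩

lemma len (h : IsUpRightPath o y n π) : (n : ℤ) = y.1 + y.2 - (o.1 + o.2) := by
  have := coordsum h n le_rfl
  rw [h.2.1] at this
  omega

lemma lppSet_finite (ω : ℤ × ℤ → ℝ) (o y : ℤ × ℤ) : (lppSet ω o y).Finite := by
  set N : ℕ := (y.1 + y.2 - (o.1 + o.2)).toNat with hN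
  haveI : Finite (Set.Icc o y) := (Set.finite_Icc o y).to_subtype
  have hsub : lppSet ω o y ⊆
      (fun f : Fin (N + 1) → Set.Icc o y => ∑ k : Fin (N + 1), ω (f k)) '' Set.univ := by
    rintro S ⟨n, π, hπ, rfl⟩
    have hn : n = N := by have := len hπ; omega
    subst hn
    exact ⟨fun k => ⟨π k, mem_Icc hπ (Nat.lt_succ_iff.mp k.isLt)⟩, trivial,
      (Finset.sum_range fun k => ω (π k)).symm⟩
  exact Set.Finite.subset (Set.finite_univ.image _) hsub

lemma lppSet_nonempty (ω : ℤ × ℤ → ℝ) {o y : ℤ × ℤ} (h : o ≤ y) :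
    (lppSet ω o y).Nonempty := by
  refine ⟨_, ((y.1 - o.1).toNat + (y.2 - o.2).toNat),
    fun k => (o.1 + (min k (y.1 - o.1).toNat : ℕ), o.2 + ((k - min k (y.1 - o.1).toNat : ℕ) : ℤ)),
    ⟨by simp, ?_, ?_⟩, rfl⟩
  · have h1 : o.1 ≤ y.1 := h.1
    have h2 : o.2 ≤ y.2 := h.2
    have : min ((y.1 - o.1).toNat + (y.2 - o.2).toNat) (y.1 - o.1).toNat = (y.1 - o.1).toNat := by
      omega
    rw [Prod.ext_iff]
    constructor <;> simp [this] <;> omega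
  · intro k hk
    by_cases hka : k < (y.1 - o.1).toNat
    · left
      have e1 : min (k + 1) (y.1 - o.1).toNat = min k (y.1 - o.1).toNat + 1 := by omega
      have e2 : (k + 1) - min (k + 1) (y.1 - o.1).toNat = k - min k (y.1 - o.1).toNat := by omega
      rw [Prod.ext_iff]
      constructor <;> simp [e1, e2]
    · right
      have e1 : min (k + 1) (y.1 - o.1).toNat = min k (y.1 - o.1).toNat := by omega
      have e2 : (k + 1) - min (k + 1) (y.1 - o.1).toNat =
          (k - min k (y.1 - o.1).toNat) + 1 := by omega
      rw [Prod.ext_iff]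
      constructor <;> simp [e1, e2]

lemma le_lppG {S : ℝ} (hS : S ∈ lppSet ω o y) : S ≤ lppG ω o y :=
  le_csSup (lppSet_finite ω o y).bddAbove hS

lemma exists_opt (ω : ℤ × ℤ → ℝ) {o y : ℤ × ℤ} (h : o ≤ y) :
    ∃ (n : ℕ) (π : ℕ → ℤ × ℤ), IsUpRightPath o y n π ∧
      lppG ω o y = ∑ k ∈ Finset.range (n + 1), ω (π k) := by
  have hmem : sSup (lppSet ω o y) ∈ lppSet ω o y :=
    (lppSet_nonempty ω h).csSup_mem (lppSet_finite ω o y)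
  obtain ⟨n, π, hπ, hS⟩ := hmem
  exact ⟨n, π, hπ, hS⟩

/-- Path-swapping: if two up-right paths share a vertex, recombining their
initial and final segments bounds the sum of their weights by crossed passage times. -/
lemma swap (ω : ℤ × ℤ → ℝ) {a b c d : ℤ × ℤ} {n m k l : ℕ} {π ρ : ℕ → ℤ × ℤ}
    (hπ : IsUpRightPath a c n π) (hρ : IsUpRightPath b d m ρ)
    (hk : k ≤ n) (hl : l ≤ m) (hx : π k = ρ l) :
    (∑ i ∈ Finset.range (n + 1), ω (π i)) + (∑ i ∈ Finset.range (m + 1), ω (ρ i)) ≤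
      lppG ω b c + lppG ω a d := by
  set σ : ℕ → ℤ × ℤ := fun j => if j ≤ l then ρ j else π (j - l + k) with hσ
  set τ : ℕ → ℤ × ℤ := fun j => if j ≤ k then π j else ρ (j - k + l) with hτ
  have hσpath : IsUpRightPath b c (l + (n - k)) σ := by
    refine ⟨by simp [hσ, hρ.1], ?_, ?_⟩
    · by_cases hnk : k = n
      · have : l + (n - k) = l := by omega
        rw [this]; simp only [hσ, if_pos le_rfl]
        rw [← hπ.2.1, ← hx, hnk]
      · have h1 : ¬ (l + (n - k) ≤ l) := by omega
        have h2 : l + (n - k) - l + k = n := by omega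
        simp only [hσ, if_neg h1, h2, hπ.2.1]
    · intro j hj
      rcases lt_trichotomy j l with hjl | rfl | hjl
      · have e1 : j + 1 ≤ l := hjl
        simp only [hσ, if_pos e1, if_pos (le_of_lt hjl)]
        exact hρ.2.2 j (lt_of_lt_of_le hjl hl)
      · have e1 : ¬ (j + 1 ≤ j) := by omega
        have e2 : j + 1 - j + k = k + 1 := by omega
        simp only [hσ, if_pos le_rfl, if_neg e1, e2, ← hx]
        exact hπ.2.2 k (by omega)
      · have e1 : ¬ (j + 1 ≤ l) := by omega
        have e2 : ¬ (j ≤ l) := by omega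
        have e3 : j + 1 - l + k = (j - l + k) + 1 := by omega
        simp only [hσ, if_neg e1, if_neg e2, e3]
        exact hπ.2.2 (j - l + k) (by omega)
  have hτpath : IsUpRightPath a d (k + (m - l)) τ := by
    refine ⟨by simp [hτ, hπ.1], ?_, ?_⟩
    · by_cases hml : l = m
      · have : k + (m - l) = k := by omega
        rw [this]; simp only [hτ, if_pos le_rfl]
        rw [hx, hml, hρ.2.1]
      · have h1 : ¬ (k + (m - l) ≤ k) := by omega
        have h2 : k + (m - l) - k + l = m := by omega
        simp only [hτ, if_neg h1, h2, hρ.2.1]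
    · intro j hj
      rcases lt_trichotomy j k with hjk | rfl | hjk
      · have e1 : j + 1 ≤ k := hjk
        simp only [hτ, if_pos e1, if_pos (le_of_lt hjk)]
        exact hπ.2.2 j (lt_of_lt_of_le hjk hk)
      · have e1 : ¬ (j + 1 ≤ j) := by omega
        have e2 : j + 1 - j + l = l + 1 := by omega
        simp only [hτ, if_pos le_rfl, if_neg e1, e2, hx]
        exact hρ.2.2 l (by omega)
      · have e1 : ¬ (j + 1 ≤ k) := by omega
        have e2 : ¬ (j ≤ k) := by omega
        have e3 : j + 1 - k + l = (j - k + l) + 1 := by omega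
        simp only [hτ, if_neg e1, if_neg e2, e3]
        exact hρ.2.2 (j - k + l) (by omega)
  have hπsplit : ∑ i ∈ Finset.range (n + 1), ω (π i) =
      (∑ i ∈ Finset.range (k + 1), ω (π i)) +
        ∑ i ∈ Finset.range (n - k), ω (π (k + 1 + i)) := by
    have e : n + 1 = (k + 1) + (n - k) := by omega
    rw [e, Finset.sum_range_add]
  have hρsplit : ∑ i ∈ Finset.range (m + 1), ω (ρ i) =
      (∑ i ∈ Finset.range (l + 1), ω (ρ i)) +
        ∑ i ∈ Finset.range (m - l), ω (ρ (l + 1 + i)) := by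
    have e : m + 1 = (l + 1) + (m - l) := by omega
    rw [e, Finset.sum_range_add]
  have hσsum : ∑ i ∈ Finset.range (l + (n - k) + 1), ω (σ i) =
      (∑ i ∈ Finset.range (l + 1), ω (ρ i)) +
        ∑ i ∈ Finset.range (n - k), ω (π (k + 1 + i)) := by
    have e : l + (n - k) + 1 = (l + 1) + (n - k) := by omega
    rw [e, Finset.sum_range_add]
    congr 1
    · refine Finset.sum_congr rfl fun i hi => ?_
      have : i ≤ l := Nat.lt_succ_iff.mp (Finset.mem_range.mp hi)
      simp only [hσ, if_pos this]
    · refine Finset.sum_congr rfl fun i hi => ?_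
      have e1 : ¬ (l + 1 + i ≤ l) := by omega
      have e2 : l + 1 + i - l + k = k + 1 + i := by omega
      simp only [hσ, if_neg e1, e2]
  have hτsum : ∑ i ∈ Finset.range (k + (m - l) + 1), ω (τ i) =
      (∑ i ∈ Finset.range (k + 1), ω (π i)) +
        ∑ i ∈ Finset.range (m - l), ω (ρ (l + 1 + i)) := by
    have e : k + (m - l) + 1 = (k + 1) + (m - l) := by omega
    rw [e, Finset.sum_range_add]
    congr 1
    · refine Finset.sum_congr rfl fun i hi => ?_
      have : i ≤ k := Nat.lt_succ_iff.mp (Finset.mem_range.mp hi)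
      simp only [hτ, if_pos this]
    · refine Finset.sum_congr rfl fun i hi => ?_
      have e1 : ¬ (k + 1 + i ≤ k) := by omega
      have e2 : k + 1 + i - k + l = l + 1 + i := by omega
      simp only [hτ, if_neg e1, e2]
  have hσle : ∑ i ∈ Finset.range (l + (n - k) + 1), ω (σ i) ≤ lppG ω b c :=
    le_lppG ⟨l + (n - k), σ, hσpath, rfl⟩
  have hτle : ∑ i ∈ Finset.range (k + (m - l) + 1), ω (τ i) ≤ lppG ω a d :=
    le_lppG ⟨k + (m - l), τ, hτpath, rfl⟩
  rw [hσsum] at hσle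
  rw [hτsum] at hτle
  linarith [hπsplit, hρsplit]

/-- Discrete intermediate value theorem. -/
lemma ivt {f : ℕ → ℤ} {K : ℕ} (h0 : 0 ≤ f 0) (hK : f K ≤ 0)
    (hstep : ∀ j < K, f j - 1 ≤ f (j + 1)) : ∃ j ≤ K, f j = 0 := by
  by_contra hc
  push_neg at hc
  have key : ∀ j ≤ K, 0 < f j := by
    intro j hj
    induction j with
    | zero => have := hc 0 (Nat.zero_le _); omega
    | succ j ih =>
      have h1 := ih (by omega)
      have h2 := hstep j (by omega)
      have h3 := hc (j + 1) hj
      omega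
  have := key K le_rfl
  omega

end CrossingAux

open CrossingAux in
/-- Crossing Lemma, `e₁`-increments: shifting the starting point to `o+e₂` decreases,
and to `o+e₁` increases, the horizontal last-passage increment at `x`. -/
theorem crossing_lemma_e1 (ω : ℤ × ℤ → ℝ) (o x : ℤ × ℤ)
    (h1 : o + (1, 0) ≤ x) (h2 : o + (0, 1) ≤ x) :
    lppG ω (o + (0, 1)) (x + (1, 0)) - lppG ω (o + (0, 1)) x ≤
        lppG ω o (x + (1, 0)) - lppG ω o x ∧
      lppG ω o (x + (1, 0)) - lppG ω o x ≤
        lppG ω (o + (1, 0)) (x + (1, 0)) - lppG ω (o + (1, 0)) x := by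
  rw [Prod.le_def] at h1 h2
  simp only [Prod.fst_add, Prod.snd_add] at h1 h2
  have hx1 : o.1 + 1 ≤ x.1 := h1.1
  have hx2 : o.2 + 1 ≤ x.2 := h2.2
  constructor
  · -- G(o+e₂, x+e₁) + G(o, x) ≤ G(o, x+e₁) + G(o+e₂, x)
    obtain ⟨n, π, hπ, hπG⟩ := exists_opt ω
      (show o + (0, 1) ≤ x + (1, 0) by rw [Prod.le_def]; constructor <;> simp <;> omega)
    obtain ⟨m, ρ, hρ, hρG⟩ := exists_opt ω
      (show o ≤ x by rw [Prod.le_def]; constructor <;> omega)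
    have hn := len hπ
    have hm := len hρ
    simp only [Prod.fst_add, Prod.snd_add] at hn hm
    have hnm : n = m := by simp at hn hm; omega
    have hm1 : 1 ≤ m := by omega
    have ea : (o + ((0 : ℤ), (1 : ℤ))).1 = o.1 := by simp
    have eb : (x + ((1 : ℤ), (0 : ℤ))).1 = x.1 + 1 := by simp
    have h0 : (0 : ℤ) ≤ (ρ (0 + 1)).1 - (π 0).1 := by
      have hs := (fst_step hρ (show 0 < m by omega)).1
      rw [hρ.1] at hs
      rw [hπ.1, ea]
      omega
    have hK : (ρ (m - 1 + 1)).1 - (π (m - 1)).1 ≤ 0 := by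
      have hs := (fst_step hπ (show m - 1 < n by omega)).2
      have e1 : m - 1 + 1 = n := by omega
      have e2 : m - 1 + 1 = m := by omega
      rw [e1, hπ.2.1, eb] at hs
      rw [e2, hρ.2.1]
      omega
    have hstep : ∀ j < m - 1, ((ρ (j + 1)).1 - (π j).1) - 1 ≤ (ρ (j + 1 + 1)).1 - (π (j + 1)).1 := by
      intro j hj
      have s1 := (fst_step hρ (show j + 1 < m by omega)).1
      have s2 := (fst_step hπ (show j < n by omega)).2
      omega
    obtain ⟨j, hj, hfj⟩ := ivt (f := fun j => (ρ (j + 1)).1 - (π j).1) h0 hK hstep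
    have hfj' : (ρ (j + 1)).1 - (π j).1 = 0 := hfj
    have hcross : π j = ρ (j + 1) := by
      have c1 := coordsum hπ j (by omega)
      have c2 := coordsum hρ (j + 1) (by omega)
      simp only [Prod.fst_add, Prod.snd_add] at c1
      simp at c1
      rw [Prod.ext_iff]
      constructor <;> push_cast at c1 c2 <;> omega
    have key := swap ω hπ hρ (show j ≤ n by omega) (show j + 1 ≤ m by omega) hcross
    rw [← hπG, ← hρG] at key
    linarith
  · -- G(o, x+e₁) + G(o+e₁, x) ≤ G(o+e₁, x+e₁) + G(o, x)
    obtain ⟨n, π, hπ, hπG⟩ := exists_opt ω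
      (show o ≤ x + (1, 0) by rw [Prod.le_def]; constructor <;> simp <;> omega)
    obtain ⟨p, ρ, hρ, hρG⟩ := exists_opt ω
      (show o + (1, 0) ≤ x by rw [Prod.le_def]; constructor <;> simp <;> omega)
    have hn := len hπ
    have hp := len hρ
    simp only [Prod.fst_add, Prod.snd_add] at hn hp
    have hnp : n = p + 2 := by simp at hn hp; omega
    have eb : (x + ((1 : ℤ), (0 : ℤ))).1 = x.1 + 1 := by simp
    have ec : (o + ((1 : ℤ), (0 : ℤ))).1 = o.1 + 1 := by simp
    have h0 : (0 : ℤ) ≤ (ρ 0).1 - (π (0 + 1)).1 := by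
      have hs := (fst_step hπ (show 0 < n by omega)).2
      rw [hπ.1] at hs
      rw [hρ.1, ec]
      omega
    have hK : (ρ p).1 - (π (p + 1)).1 ≤ 0 := by
      have hs := (fst_step hπ (show p + 1 < n by omega)).2
      have e1 : p + 1 + 1 = n := by omega
      rw [e1, hπ.2.1, eb] at hs
      rw [hρ.2.1]
      omega
    have hstep : ∀ j < p, ((ρ j).1 - (π (j + 1)).1) - 1 ≤ (ρ (j + 1)).1 - (π (j + 1 + 1)).1 := by
      intro j hj
      have s1 := (fst_step hρ (show j < p by omega)).1
      have s2 := (fst_step hπ (show j + 1 < n by omega)).2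
      omega
    obtain ⟨j, hj, hfj⟩ := ivt (f := fun j => (ρ j).1 - (π (j + 1)).1) h0 hK hstep
    have hfj' : (ρ j).1 - (π (j + 1)).1 = 0 := hfj
    have hcross : π (j + 1) = ρ j := by
      have c1 := coordsum hπ (j + 1) (by omega)
      have c2 := coordsum hρ j (by omega)
      simp only [Prod.fst_add, Prod.snd_add] at c2
      simp at c2
      rw [Prod.ext_iff]
      constructor <;> push_cast at c1 c2 <;> omega
    have key := swap ω hπ hρ (show j + 1 ≤ n by omega) (show j ≤ p by omega) hcross
    rw [← hπG, ← hρG] at key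
    linarith
end

section
/- (Monotonicity of LPP increments in boundary weights.) Suppose two weight configurations ω and ω̃ on ℤ² satisfy ω_{o+ie₁} ≥ ω̃_{o+ie₁} for all i ≥ 1, ω_{o+je₂} ≤ ω̃_{o+je₂} for all j ≥ 1, and ω_x = ω̃_x for all x ∈ o + ℤ²_{>0}. Let G and G̃ be the corresponding last-passage processes from base point o. Then for all y ∈ o + ℤ²_{≥0}: G_{o,y+e₁} − G_{o,y} ≥ G̃_{o,y+e₁} − G̃_{o,y} and G_{o,y+e₂} − G_{o,y} ≤ G̃_{o,y+e₂} − G̃_{o,y}. -/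
noncomputable def Gaux (ω : ℤ × ℤ → ℝ) (o : ℤ × ℤ) : ℕ → ℤ × ℤ → ℝ
  | 0, y => ω y
  | n+1, y => ω y + (if y.1 = o.1 then Gaux ω o n (y - (0,1))
      else if y.2 = o.2 then Gaux ω o n (y - (1,0))
      else max (Gaux ω o n (y - (1,0))) (Gaux ω o n (y - (0,1))))

lemma path_bounds {o y : ℤ × ℤ} {n : ℕ} {π : ℕ → ℤ × ℤ}
    (h : IsUpRightPath o y n π) :
    ∀ k, k ≤ n → o ≤ π k ∧ (π k).1 + (π k).2 = o.1 + o.2 + k := by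
  intro k
  induction k with
  | zero => intro _; simp [h.1]
  | succ k ih =>
    intro hk
    obtain ⟨h1, h2⟩ := ih (by omega)
    have hs := h.2.2 k (by omega)
    rw [Prod.le_def] at h1 ⊢
    rcases hs with hs | hs <;>
    · have e1 : (π (k+1)).1 = (π k).1 + (1:ℤ) ∨ (π (k+1)).1 = (π k).1 := by
        rw [Prod.ext_iff] at hs
        simp only [Prod.fst_sub, Prod.snd_sub] at hs
        omega
      have e2 : (π (k+1)).2 = (π k).2 + (1:ℤ) ∨ (π (k+1)).2 = (π k).2 := by
        rw [Prod.ext_iff] at hs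
        simp only [Prod.fst_sub, Prod.snd_sub] at hs
        omega
      have e3 : (π (k+1)).1 + (π (k+1)).2 = (π k).1 + (π k).2 + 1 := by
        rw [Prod.ext_iff] at hs
        simp only [Prod.fst_sub, Prod.snd_sub] at hs
        omega
      constructor
      · constructor <;> omega
      · push_cast; omega

/-- extend a path by one step -/
lemma path_extend {o y : ℤ × ℤ} {m : ℕ} {π : ℕ → ℤ × ℤ} (ω : ℤ × ℤ → ℝ)
    (h : IsUpRightPath o y m π) (e : ℤ × ℤ) (he : e = (1,0) ∨ e = (0,1)) :
    ∃ π' : ℕ → ℤ × ℤ, IsUpRightPath o (y + e) (m + 1) π' ∧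
      ∑ k ∈ Finset.range (m + 2), ω (π' k)
        = (∑ k ∈ Finset.range (m + 1), ω (π k)) + ω (y + e) := by
  refine ⟨fun k => if k = m + 1 then y + e else π k, ⟨?_, ?_, ?_⟩, ?_⟩
  · simp [h.1]
  · simp
  · intro k hk
    by_cases hkm : k = m
    · subst hkm
      simp [h.2.1]
      rcases he with he | he <;> simp [he]
    · have : k ≠ m + 1 := by omega
      have : k + 1 ≠ m + 1 := by omega
      simpa [‹k ≠ m + 1›, this, hkm] using h.2.2 k (by omega)
  · rw [Finset.sum_range_succ]
    congr 1
    · apply Finset.sum_congr rfl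
      intro k hk
      simp only [Finset.mem_range] at hk
      have : k ≠ m + 1 := by omega
      simp [this]
    · simp

lemma gaux_isGreatest (ω : ℤ × ℤ → ℝ) (o : ℤ × ℤ) (n : ℕ) :
    ∀ y : ℤ × ℤ, o ≤ y → (y.1 - o.1) + (y.2 - o.2) = (n : ℤ) →
    IsGreatest { S | ∃ (m : ℕ) (π : ℕ → ℤ × ℤ), IsUpRightPath o y m π ∧
      S = ∑ k ∈ Finset.range (m + 1), ω (π k) } (Gaux ω o n y) := by
  induction n with
  | zero =>
    intro y hy hsum
    rw [Prod.le_def] at hy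
    have hyo : y = o := by rw [Prod.ext_iff]; omega
    subst hyo
    constructor
    · exact ⟨0, fun _ => y, ⟨rfl, rfl, by omega⟩, by simp [Gaux]⟩
    · rintro S ⟨m, π, hπ, rfl⟩
      have hm := (path_bounds hπ m le_rfl).2
      rw [hπ.2.1] at hm
      have : m = 0 := by omega
      subst this
      simp [Gaux, hπ.2.1]
  | succ n ih =>
    intro y hy hsum
    rw [Prod.le_def] at hy
    constructor
    · -- membership
      by_cases hx : y.1 = o.1
      · -- must step up
        have hy2 : o.2 < y.2 := by omega
        have hz : o ≤ y - (0,1) := by rw [Prod.le_def]; simp; omega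
        have hzs : ((y - (0,1)).1 - o.1) + ((y - (0,1)).2 - o.2) = (n : ℤ) := by
          simp; push_cast at hsum ⊢; omega
        obtain ⟨m, π, hπ, hSeq⟩ := (ih (y - (0,1)) hz hzs).1
        obtain ⟨π', hπ', hsum'⟩ := path_extend ω hπ (0,1) (Or.inr rfl)
        refine ⟨m + 1, π', by simpa using hπ', ?_⟩
        rw [hsum', ← hSeq]
        simp [Gaux, hx]
        ring
      · by_cases hx2 : y.2 = o.2
        · have hz : o ≤ y - (1,0) := by rw [Prod.le_def]; simp; omega
          have hzs : ((y - (1,0)).1 - o.1) + ((y - (1,0)).2 - o.2) = (n : ℤ) := by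
            simp; push_cast at hsum ⊢; omega
          obtain ⟨m, π, hπ, hSeq⟩ := (ih (y - (1,0)) hz hzs).1
          obtain ⟨π', hπ', hsum'⟩ := path_extend ω hπ (1,0) (Or.inl rfl)
          refine ⟨m + 1, π', by simpa using hπ', ?_⟩
          rw [hsum', ← hSeq]
          simp [Gaux, hx, hx2]
          ring
        · -- interior: pick the larger of the two
          rcases le_total (Gaux ω o n (y - (1,0))) (Gaux ω o n (y - (0,1))) with hle | hle
          · have hy2 : o.2 < y.2 := by omega
            have hz : o ≤ y - (0,1) := by rw [Prod.le_def]; simp; omega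
            have hzs : ((y - (0,1)).1 - o.1) + ((y - (0,1)).2 - o.2) = (n : ℤ) := by
              simp; push_cast at hsum ⊢; omega
            obtain ⟨m, π, hπ, hSeq⟩ := (ih (y - (0,1)) hz hzs).1
            obtain ⟨π', hπ', hsum'⟩ := path_extend ω hπ (0,1) (Or.inr rfl)
            refine ⟨m + 1, π', by simpa using hπ', ?_⟩
            rw [hsum', ← hSeq]
            simp [Gaux, hx, hx2, max_eq_right hle]
            ring
          · have hy1 : o.1 < y.1 := by omega
            have hz : o ≤ y - (1,0) := by rw [Prod.le_def]; simp; omega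
            have hzs : ((y - (1,0)).1 - o.1) + ((y - (1,0)).2 - o.2) = (n : ℤ) := by
              simp; push_cast at hsum ⊢; omega
            obtain ⟨m, π, hπ, hSeq⟩ := (ih (y - (1,0)) hz hzs).1
            obtain ⟨π', hπ', hsum'⟩ := path_extend ω hπ (1,0) (Or.inl rfl)
            refine ⟨m + 1, π', by simpa using hπ', ?_⟩
            rw [hsum', ← hSeq]
            simp [Gaux, hx, hx2, max_eq_left hle]
            ring
    · -- upper bound
      rintro S ⟨m, π, hπ, rfl⟩
      have hm := (path_bounds hπ m le_rfl).2
      rw [hπ.2.1] at hm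
      have hmn : m = n + 1 := by omega
      subst hmn
      have hlast := hπ.2.2 n (by omega)
      have hπn : o ≤ π n ∧ (π n).1 + (π n).2 = o.1 + o.2 + n :=
        path_bounds hπ n (by omega)
      have hrestrict : IsUpRightPath o (π n) n π :=
        ⟨hπ.1, rfl, fun k hk => hπ.2.2 k (by omega)⟩
      have hmem : (∑ k ∈ Finset.range (n + 1), ω (π k)) ∈
          { S | ∃ (m : ℕ) (σ : ℕ → ℤ × ℤ), IsUpRightPath o (π n) m σ ∧
            S = ∑ k ∈ Finset.range (m + 1), ω (σ k) } := ⟨n, π, hrestrict, rfl⟩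
      have hzsum : ((π n).1 - o.1) + ((π n).2 - o.2) = (n : ℤ) := by
        push_cast at hπn ⊢; omega
      have hub := (ih (π n) hπn.1 hzsum).2 hmem
      rw [Finset.sum_range_succ, hπ.2.1]
      rcases hlast with hs | hs
      · have hpn : π n = y - (1,0) := by
          rw [hπ.2.1] at hs
          rw [Prod.ext_iff] at hs ⊢
          simp only [Prod.fst_sub, Prod.snd_sub] at hs ⊢
          constructor <;> omega
        have hx1 : y.1 ≠ o.1 := by
          have := hπn.1
          rw [Prod.le_def, hpn] at this
          simp at this
          omega
        rw [hpn] at hub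
        simp only [Gaux, hx1, if_false]
        by_cases hx2 : y.2 = o.2
        · simp only [hx2, if_true]; linarith
        · simp only [hx2, if_false]
          have := le_max_left (Gaux ω o n (y - (1,0))) (Gaux ω o n (y - (0,1)))
          linarith
      · have hpn : π n = y - (0,1) := by
          rw [hπ.2.1] at hs
          rw [Prod.ext_iff] at hs ⊢
          simp only [Prod.fst_sub, Prod.snd_sub] at hs ⊢
          constructor <;> omega
        rw [hpn] at hub
        by_cases hx1 : y.1 = o.1
        · simp only [Gaux, hx1, if_true]; linarith
        · simp only [Gaux, hx1, if_false]
          have hx2 : y.2 ≠ o.2 := by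
            have := hπn.1
            rw [Prod.le_def, hpn] at this
            simp at this
            omega
          simp only [hx2, if_false]
          have := le_max_right (Gaux ω o n (y - (1,0))) (Gaux ω o n (y - (0,1)))
          linarith

lemma lppG_eq (ω : ℤ × ℤ → ℝ) (o : ℤ × ℤ) {y : ℤ × ℤ} {n : ℕ} (hy : o ≤ y)
    (hs : (y.1 - o.1) + (y.2 - o.2) = (n : ℤ)) :
    lppG ω o y = Gaux ω o n y := by
  rw [lppG]
  exact (gaux_isGreatest ω o n y hy hs).csSup_eq

/-- the number of steps to `y` -/
noncomputable def nsteps (o y : ℤ × ℤ) : ℕ := ((y.1 - o.1) + (y.2 - o.2)).toNat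

lemma nsteps_cast {o y : ℤ × ℤ} (hy : o ≤ y) :
    ((nsteps o y : ℕ) : ℤ) = (y.1 - o.1) + (y.2 - o.2) := by
  rw [Prod.le_def] at hy
  rw [nsteps, Int.toNat_of_nonneg (by omega)]

lemma rec_x_axis (ω : ℤ × ℤ → ℝ) (o : ℤ × ℤ) {y : ℤ × ℤ} (hy : o ≤ y) (h : y.2 = o.2) :
    lppG ω o (y + (1,0)) = lppG ω o y + ω (y + (1,0)) := by
  have hy' := hy
  rw [Prod.le_def] at hy'
  have hn := nsteps_cast hy
  set n := nsteps o y with hndef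
  have h1 : lppG ω o (y + (1,0)) = Gaux ω o (n+1) (y + (1,0)) := by
    apply lppG_eq
    · rw [Prod.le_def]; constructor <;> simp <;> omega
    · simp; push_cast; omega
  have h2 : lppG ω o y = Gaux ω o n y := lppG_eq ω o hy (by omega)
  rw [h1, h2]
  have hx1 : (y + (1,0)).1 ≠ o.1 := by simp; omega
  have hx2 : (y + (1,0)).2 = o.2 := by simpa using h
  simp only [Gaux, hx1, if_false, hx2, if_true, add_sub_cancel_right]
  ring

lemma rec_y_axis (ω : ℤ × ℤ → ℝ) (o : ℤ × ℤ) {y : ℤ × ℤ} (hy : o ≤ y) (h : y.1 = o.1) :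
    lppG ω o (y + (0,1)) = lppG ω o y + ω (y + (0,1)) := by
  have hy' := hy
  rw [Prod.le_def] at hy'
  have hn := nsteps_cast hy
  set n := nsteps o y with hndef
  have h1 : lppG ω o (y + (0,1)) = Gaux ω o (n+1) (y + (0,1)) := by
    apply lppG_eq
    · rw [Prod.le_def]; constructor <;> simp <;> omega
    · simp; push_cast; omega
  have h2 : lppG ω o y = Gaux ω o n y := lppG_eq ω o hy (by omega)
  rw [h1, h2]
  have hx1 : (y + (0,1)).1 = o.1 := by simpa using h
  simp only [Gaux, hx1, if_true, add_sub_cancel_right]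
  ring

lemma rec_x_int (ω : ℤ × ℤ → ℝ) (o : ℤ × ℤ) {y : ℤ × ℤ} (hy : o ≤ y) (h : o.2 < y.2) :
    lppG ω o (y + (1,0)) = ω (y + (1,0)) + max (lppG ω o y) (lppG ω o (y + (1,-1))) := by
  have hy' := hy
  rw [Prod.le_def] at hy'
  have hn := nsteps_cast hy
  set n := nsteps o y with hndef
  have h1 : lppG ω o (y + (1,0)) = Gaux ω o (n+1) (y + (1,0)) := by
    apply lppG_eq
    · rw [Prod.le_def]; constructor <;> simp <;> omega
    · simp; push_cast; omega
  have h2 : lppG ω o y = Gaux ω o n y := lppG_eq ω o hy (by omega)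
  have h3 : lppG ω o (y + (1,-1)) = Gaux ω o n (y + (1,-1)) := by
    apply lppG_eq
    · rw [Prod.le_def]; constructor <;> simp <;> omega
    · simp; push_cast; omega
  rw [h1, h2, h3]
  have hx1 : (y + (1,0)).1 ≠ o.1 := by simp; omega
  have hx2 : (y + (1,0)).2 ≠ o.2 := by simp; omega
  have e1 : y + (1,0) - (1,0) = y := add_sub_cancel_right y (1,0)
  have e2 : y + ((1:ℤ),(0:ℤ)) - (0,1) = y + (1,-1) := by
    rw [Prod.ext_iff]; simp; omega
  simp only [Gaux, hx1, if_false, hx2, e1, e2]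

lemma rec_y_int (ω : ℤ × ℤ → ℝ) (o : ℤ × ℤ) {y : ℤ × ℤ} (hy : o ≤ y) (h : o.1 < y.1) :
    lppG ω o (y + (0,1)) = ω (y + (0,1)) + max (lppG ω o (y + (-1,1))) (lppG ω o y) := by
  have hy' := hy
  rw [Prod.le_def] at hy'
  have hn := nsteps_cast hy
  set n := nsteps o y with hndef
  have h1 : lppG ω o (y + (0,1)) = Gaux ω o (n+1) (y + (0,1)) := by
    apply lppG_eq
    · rw [Prod.le_def]; constructor <;> simp <;> omega
    · simp; push_cast; omega
  have h2 : lppG ω o y = Gaux ω o n y := lppG_eq ω o hy (by omega)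
  have h3 : lppG ω o (y + (-1,1)) = Gaux ω o n (y + (-1,1)) := by
    apply lppG_eq
    · rw [Prod.le_def]; constructor <;> simp <;> omega
    · simp; push_cast; omega
  rw [h1, h2, h3]
  have hx1 : (y + (0,1)).1 ≠ o.1 := by simp; omega
  have hx2 : (y + (0,1)).2 ≠ o.2 := by simp; omega
  have e1 : y + ((0:ℤ),(1:ℤ)) - (0,1) = y := add_sub_cancel_right y (0,1)
  have e2 : y + ((0:ℤ),(1:ℤ)) - (1,0) = y + (-1,1) := by
    rw [Prod.ext_iff]; simp; omega
  simp only [Gaux, hx1, if_false, hx2, e1, e2]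

/-- Monotonicity of LPP increments in the boundary weights: increasing the weights
on the `e₁`-axis and decreasing them on the `e₂`-axis (keeping the bulk fixed)
increases horizontal increments and decreases vertical increments. -/
theorem lpp_increment_monotonicity (ω ωt : ℤ × ℤ → ℝ) (o : ℤ × ℤ)
    (h1 : ∀ i : ℤ, 1 ≤ i → ωt (o + (i, 0)) ≤ ω (o + (i, 0)))
    (h2 : ∀ j : ℤ, 1 ≤ j → ω (o + (0, j)) ≤ ωt (o + (0, j)))
    (h3 : ∀ x : ℤ × ℤ, o.1 < x.1 → o.2 < x.2 → ω x = ωt x) :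
    ∀ y : ℤ × ℤ, o ≤ y →
      (lppG ωt o (y + (1, 0)) - lppG ωt o y ≤ lppG ω o (y + (1, 0)) - lppG ω o y) ∧
      (lppG ω o (y + (0, 1)) - lppG ω o y ≤ lppG ωt o (y + (0, 1)) - lppG ωt o y) := by
  have main : ∀ n : ℕ, ∀ y : ℤ × ℤ, o ≤ y → (y.1 - o.1) + (y.2 - o.2) = (n : ℤ) →
      (lppG ωt o (y + (1, 0)) - lppG ωt o y ≤ lppG ω o (y + (1, 0)) - lppG ω o y) ∧
      (lppG ω o (y + (0, 1)) - lppG ω o y ≤ lppG ωt o (y + (0, 1)) - lppG ωt o y) := by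
    intro n
    induction n with
    | zero =>
      intro y hy hsum
      have hy' := hy
      rw [Prod.le_def] at hy'
      have hx1 : y.1 = o.1 := by omega
      have hx2 : y.2 = o.2 := by omega
      constructor
      · rw [rec_x_axis ω o hy hx2, rec_x_axis ωt o hy hx2]
        have hrw : y + ((1:ℤ),(0:ℤ)) = o + (y.1 + 1 - o.1, 0) := by
          rw [Prod.ext_iff]; simp; omega
        rw [hrw]
        have := h1 (y.1 + 1 - o.1) (by omega)
        linarith
      · rw [rec_y_axis ω o hy hx1, rec_y_axis ωt o hy hx1]
        have hrw : y + ((0:ℤ),(1:ℤ)) = o + (0, y.2 + 1 - o.2) := by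
          rw [Prod.ext_iff]; simp; omega
        rw [hrw]
        have := h2 (y.2 + 1 - o.2) (by omega)
        linarith
    | succ n ih =>
      intro y hy hsum
      have hy' := hy
      rw [Prod.le_def] at hy'
      constructor
      · -- horizontal increment
        by_cases hx2 : y.2 = o.2
        · rw [rec_x_axis ω o hy hx2, rec_x_axis ωt o hy hx2]
          have hrw : y + ((1:ℤ),(0:ℤ)) = o + (y.1 + 1 - o.1, 0) := by
            rw [Prod.ext_iff]; simp; omega
          rw [hrw]
          have := h1 (y.1 + 1 - o.1) (by omega)
          linarith
        · have hlt : o.2 < y.2 := by omega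
          set z := y - ((0:ℤ),(1:ℤ)) with hzdef
          have hz : o ≤ z := by rw [Prod.le_def]; simp [hzdef]; omega
          have hzs : (z.1 - o.1) + (z.2 - o.2) = (n : ℤ) := by
            simp [hzdef]; push_cast at hsum; omega
          obtain ⟨ihA, ihB⟩ := ih z hz hzs
          have ez : z + ((0:ℤ),(1:ℤ)) = y := by rw [Prod.ext_iff]; simp [hzdef]
          have ez2 : z + ((1:ℤ),(0:ℤ)) = y + (1,-1) := by
            rw [Prod.ext_iff]; simp [hzdef]; omega
          rw [ez2] at ihA
          rw [ez] at ihB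
          rw [rec_x_int ω o hy hlt, rec_x_int ωt o hy hlt]
          have hw : ω (y + (1,0)) = ωt (y + (1,0)) := by
            apply h3 <;> simp <;> omega
          have key : lppG ωt o (y + (1,-1)) - lppG ωt o y
              ≤ lppG ω o (y + (1,-1)) - lppG ω o y := by linarith
          have m1 : max (lppG ωt o y) (lppG ωt o (y + (1,-1))) - lppG ωt o y
              = max 0 (lppG ωt o (y + (1,-1)) - lppG ωt o y) := by
            rw [← sub_self (lppG ωt o y), sub_self, ← max_sub_sub_right, sub_self]
          have m2 : max (lppG ω o y) (lppG ω o (y + (1,-1))) - lppG ω o y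
              = max 0 (lppG ω o (y + (1,-1)) - lppG ω o y) := by
            rw [← max_sub_sub_right, sub_self]
          have mle := max_le_max (le_refl (0:ℝ)) key
          rw [hw]
          linarith [m1, m2, mle]
      · -- vertical increment
        by_cases hx1 : y.1 = o.1
        · rw [rec_y_axis ω o hy hx1, rec_y_axis ωt o hy hx1]
          have hrw : y + ((0:ℤ),(1:ℤ)) = o + (0, y.2 + 1 - o.2) := by
            rw [Prod.ext_iff]; simp; omega
          rw [hrw]
          have := h2 (y.2 + 1 - o.2) (by omega)
          linarith
        · have hlt : o.1 < y.1 := by omega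
          set z := y - ((1:ℤ),(0:ℤ)) with hzdef
          have hz : o ≤ z := by rw [Prod.le_def]; simp [hzdef]; omega
          have hzs : (z.1 - o.1) + (z.2 - o.2) = (n : ℤ) := by
            simp [hzdef]; push_cast at hsum; omega
          obtain ⟨ihA, ihB⟩ := ih z hz hzs
          have ez : z + ((1:ℤ),(0:ℤ)) = y := by rw [Prod.ext_iff]; simp [hzdef]
          have ez2 : z + ((0:ℤ),(1:ℤ)) = y + (-1,1) := by
            rw [Prod.ext_iff]; simp [hzdef]; omega
          rw [ez] at ihA
          rw [ez2] at ihB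
          rw [rec_y_int ω o hy hlt, rec_y_int ωt o hy hlt]
          have hw : ω (y + (0,1)) = ωt (y + (0,1)) := by
            apply h3 <;> simp <;> omega
          have key : lppG ω o (y + (-1,1)) - lppG ω o y
              ≤ lppG ωt o (y + (-1,1)) - lppG ωt o y := by linarith
          have m1 : max (lppG ω o (y + (-1,1))) (lppG ω o y) - lppG ω o y
              = max 0 (lppG ω o (y + (-1,1)) - lppG ω o y) := by
            rw [← max_sub_sub_right, sub_self, max_comm]
          have m2 : max (lppG ωt o (y + (-1,1))) (lppG ωt o y) - lppG ωt o y
              = max 0 (lppG ωt o (y + (-1,1)) - lppG ωt o y) := by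
            rw [← max_sub_sub_right, sub_self, max_comm]
          have mle := max_le_max (le_refl (0:ℝ)) key
          rw [hw]
          linarith [m1, m2, mle]
  intro y hy
  exact main (nsteps o y) y hy (nsteps_cast hy).symm
end

section
/- (Decomposition over an intermediate point.) Let u ≤ v ≤ y in ℤ² and let G be last-passage percolation with arbitrary real weights. Define the induced process G^{[u]}_{v,·} on v + ℤ²_{≥0} with boundary increment weights I_{v+ke₁} = G_{u,v+ke₁} − G_{u,v+(k−1)e₁} and J_{v+ke₂} = G_{u,v+ke₂} − G_{u,v+(k−1)e₂}, corner weight 0, and bulk weights ω_x for x ∈ v + ℤ²_{>0}. Then G_{u,y} = G_{u,v} + G^{[u]}_{v,y}. -/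
/-- The weights of the LPP process induced at `v` by the LPP process started at `u`:
zero at the corner `v`, increments of `G_{u,·}` along the axes through `v`,
and the original bulk weights strictly above-right of `v`. -/
noncomputable def inducedWt (ω : ℤ × ℤ → ℝ) (u v : ℤ × ℤ) (x : ℤ × ℤ) : ℝ :=
  if x = v then 0
  else if x.2 = v.2 ∧ v.1 < x.1 then lppG ω u x - lppG ω u (x - (1, 0))
  else if x.1 = v.1 ∧ v.2 < x.2 then lppG ω u x - lppG ω u (x - (0, 1))
  else ω x

@[elab_as_elim]
theorem quadrant_induction {v : ℤ × ℤ} {P : ℤ × ℤ → Prop} (corner : P v)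
    (add_one_zero : ∀ y, v ≤ y → y.2 = v.2 → P y → P (y + (1, 0)))
    (add_zero_one : ∀ y, v ≤ y → y.1 = v.1 → P y → P (y + (0, 1)))
    (add_one_one : ∀ y, v ≤ y → P (y + (1, 0)) → P (y + (0, 1)) → P (y + (1, 1)))
    {y : ℤ × ℤ} (hy : v ≤ y) : P y := by
  suffices h : ∀ m n : ℕ, P (v.1 + m, v.2 + n) by
    obtain ⟨h1, h2⟩ := Prod.le_def.1 hy
    convert h (y.1 - v.1).toNat (y.2 - v.2).toNat using 1
    ext <;> simp <;> omega
  have hle (m n : ℕ) : v ≤ (v.1 + m, v.2 + n) := Prod.mk_le_mk.2 (by constructor <;> omega)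
  intro m
  induction m with
  | zero =>
    intro n
    induction n with
    | zero => simpa using corner
    | succ n ih =>
      convert add_zero_one _ (hle 0 n) (by simp) ih using 1
      ext <;> simp; omega
  | succ m ihm =>
    intro n
    induction n with
    | zero =>
      convert add_one_zero _ (hle m 0) (by simp) (ihm 0) using 1
      ext <;> simp; omega
    | succ n ihn =>
      convert add_one_one _ (hle m n) ?_ ?_ using 1
      · ext <;> simp <;> omega
      · convert ihn using 1; ext <;> simp; omega
      · convert ihm (n + 1) using 1; ext <;> simp; omega

theorem lt_of_upRightStep {y z : ℤ × ℤ} (h : y - z = (1, 0) ∨ y - z = (0, 1)) : z < y := by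
  rcases h with h | h <;> rw [← sub_pos, h] <;> simp [Prod.lt_iff]

namespace IsUpRightPath

variable {o y z : ℤ × ℤ} {n : ℕ} {π π' : ℕ → ℤ × ℤ}

theorem zero_iff : IsUpRightPath o y 0 π ↔ π 0 = o ∧ y = o := by
  simp only [IsUpRightPath, Nat.not_lt_zero, false_implies, implies_true, and_true]
  constructor
  · rintro ⟨h0, rfl⟩; exact ⟨h0, h0⟩
  · rintro ⟨h0, rfl⟩; exact ⟨h0, h0⟩

theorem succ_iff :
    IsUpRightPath o y (n + 1) π ↔
      IsUpRightPath o (π n) n π ∧ π (n + 1) = y ∧ (y - π n = (1, 0) ∨ y - π n = (0, 1)) := by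
  simp only [IsUpRightPath, Nat.lt_succ_iff_lt_or_eq, true_and]
  constructor
  · rintro ⟨h0, rfl, hstep⟩
    exact ⟨⟨h0, fun k hk => hstep k (Or.inl hk)⟩, rfl, hstep n (Or.inr rfl)⟩
  · rintro ⟨⟨h0, hstep⟩, rfl, hlast⟩
    refine ⟨h0, rfl, fun k hk => ?_⟩
    rcases hk with hk | rfl
    exacts [hstep k hk, hlast]

theorem congr (h : IsUpRightPath o y n π) (hπ : ∀ k ≤ n, π' k = π k) :
    IsUpRightPath o y n π' := by
  obtain ⟨h0, hn, hstep⟩ := h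
  refine ⟨(hπ 0 n.zero_le).trans h0, (hπ n le_rfl).trans hn, fun k hk => ?_⟩
  rw [hπ k hk.le, hπ (k + 1) hk]
  exact hstep k hk

theorem le (h : IsUpRightPath o y n π) : o ≤ y := by
  induction n generalizing y with
  | zero => exact (zero_iff.1 h).2.ge
  | succ n ih =>
    obtain ⟨hpre, -, hstep⟩ := succ_iff.1 h
    exact (ih hpre).trans (lt_of_upRightStep hstep).le

theorem extend (h : IsUpRightPath o z n π) (hy : y - z = (1, 0) ∨ y - z = (0, 1)) :
    IsUpRightPath o y (n + 1) (fun k => if k ≤ n then π k else y) := by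
  have hπ : ∀ k ≤ n, (if k ≤ n then π k else y) = π k := fun k hk => if_pos hk
  refine succ_iff.2 ⟨?_, by simp, ?_⟩
  · rw [hπ n le_rfl, h.2.1]
    exact h.congr hπ
  · simpa [h.2.1] using hy

end IsUpRightPath

def pathSums (ω : ℤ × ℤ → ℝ) (o y : ℤ × ℤ) : Set ℝ :=
  { S | ∃ (n : ℕ) (π : ℕ → ℤ × ℤ), IsUpRightPath o y n π ∧
      S = ∑ k ∈ Finset.range (n + 1), ω (π k) }

section pathSums

variable {ω : ℤ × ℤ → ℝ} {o y : ℤ × ℤ}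

theorem lppG_eq_sSup_pathSums : lppG ω o y = sSup (pathSums ω o y) := rfl

theorem le_of_mem_pathSums {s : ℝ} (h : s ∈ pathSums ω o y) : o ≤ y := by
  obtain ⟨n, π, hπ, -⟩ := h
  exact hπ.le

theorem pathSums_eq_empty (h : ¬o ≤ y) : pathSums ω o y = ∅ :=
  Set.eq_empty_of_forall_notMem fun _ hs => h (le_of_mem_pathSums hs)

theorem pathSums_self : pathSums ω o o = {ω o} := by
  ext s
  constructor
  · rintro ⟨_ | n, π, hπ, rfl⟩
    · simp [(IsUpRightPath.zero_iff.1 hπ).1]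
    · obtain ⟨hpre, -, hstep⟩ := IsUpRightPath.succ_iff.1 hπ
      exact absurd (hpre.le.trans_lt (lt_of_upRightStep hstep)) (lt_irrefl o)
  · rintro rfl
    exact ⟨0, fun _ => o, IsUpRightPath.zero_iff.2 ⟨rfl, rfl⟩, by simp⟩

theorem add_mem_pathSums {z : ℤ × ℤ} {t : ℝ} (ht : t ∈ pathSums ω o z)
    (hy : y - z = (1, 0) ∨ y - z = (0, 1)) : t + ω y ∈ pathSums ω o y := by
  obtain ⟨n, π, hπ, rfl⟩ := ht
  refine ⟨n + 1, _, hπ.extend hy, ?_⟩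
  rw [Finset.sum_range_succ _ (n + 1), if_neg n.not_succ_le_self]
  congr 1
  exact Finset.sum_congr rfl fun k hk => by rw [if_pos (Finset.mem_range_succ_iff.1 hk)]

theorem pathSums_of_ne (hy : y ≠ o) :
    pathSums ω o y = (· + ω y) '' (pathSums ω o (y - (1, 0)) ∪ pathSums ω o (y - (0, 1))) := by
  ext s
  constructor
  · rintro ⟨_ | n, π, hπ, rfl⟩
    · exact absurd (IsUpRightPath.zero_iff.1 hπ).2 hy
    · obtain ⟨hpre, rfl, hstep⟩ := IsUpRightPath.succ_iff.1 hπ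
      refine ⟨_, ?_, (Finset.sum_range_succ (fun k => ω (π k)) (n + 1)).symm⟩
      rcases hstep with hstep | hstep
      · exact Or.inl ⟨n, π, by rwa [← hstep, sub_sub_cancel], rfl⟩
      · exact Or.inr ⟨n, π, by rwa [← hstep, sub_sub_cancel], rfl⟩
  · rintro ⟨t, ht | ht, rfl⟩
    exacts [add_mem_pathSums ht (Or.inl (sub_sub_cancel _ _)),
      add_mem_pathSums ht (Or.inr (sub_sub_cancel _ _))]

theorem isGreatest_pathSums_add_one_zero {a : ℝ} (ha : IsGreatest (pathSums ω o y) a)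
    (h2 : y.2 = o.2) :
    IsGreatest (pathSums ω o (y + (1, 0))) (a + ω (y + (1, 0))) := by
  have hoy := Prod.le_def.1 (le_of_mem_pathSums ha.1)
  have hne : y + (1, 0) ≠ o := fun h => by
    rw [Prod.ext_iff] at h
    simp only [Prod.fst_add, Prod.snd_add] at h
    omega
  have hbelow : pathSums ω o (y + (1, 0) - (0, 1)) = ∅ :=
    pathSums_eq_empty fun h => by simp only [Prod.le_def, Prod.snd_sub, Prod.snd_add] at h; omega
  rw [pathSums_of_ne hne, hbelow, Set.union_empty, add_sub_cancel_right]
  exact add_left_mono.map_isGreatest ha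

theorem isGreatest_pathSums_add_zero_one {a : ℝ} (ha : IsGreatest (pathSums ω o y) a)
    (h1 : y.1 = o.1) :
    IsGreatest (pathSums ω o (y + (0, 1))) (a + ω (y + (0, 1))) := by
  have hoy := Prod.le_def.1 (le_of_mem_pathSums ha.1)
  have hne : y + (0, 1) ≠ o := fun h => by
    rw [Prod.ext_iff] at h
    simp only [Prod.fst_add, Prod.snd_add] at h
    omega
  have hleft : pathSums ω o (y + (0, 1) - (1, 0)) = ∅ :=
    pathSums_eq_empty fun h => by simp only [Prod.le_def, Prod.fst_sub, Prod.fst_add] at h; omega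
  rw [pathSums_of_ne hne, hleft, Set.empty_union, add_sub_cancel_right]
  exact add_left_mono.map_isGreatest ha

theorem isGreatest_pathSums_add_one_one {a b : ℝ}
    (ha : IsGreatest (pathSums ω o (y + (0, 1))) a)
    (hb : IsGreatest (pathSums ω o (y + (1, 0))) b) :
    IsGreatest (pathSums ω o (y + (1, 1))) (max a b + ω (y + (1, 1))) := by
  have hoy := Prod.le_def.1 (le_of_mem_pathSums ha.1)
  have hne : y + (1, 1) ≠ o := fun h => by
    rw [Prod.ext_iff] at h
    simp only [Prod.fst_add, Prod.snd_add] at h hoy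
    omega
  have hleft : y + (1, 1) - (1, 0) = y + (0, 1) := by ext <;> simp
  have hbelow : y + (1, 1) - (0, 1) = y + (1, 0) := by ext <;> simp
  rw [pathSums_of_ne hne, hleft, hbelow]
  exact add_left_mono.map_isGreatest (ha.union hb)

theorem exists_isGreatest_pathSums (h : o ≤ y) : ∃ a, IsGreatest (pathSums ω o y) a := by
  refine quadrant_induction ?_ ?_ ?_ ?_ h
  · exact ⟨ω o, pathSums_self ▸ isGreatest_singleton⟩
  · rintro y - h2 ⟨a, ha⟩
    exact ⟨_, isGreatest_pathSums_add_one_zero ha h2⟩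
  · rintro y - h1 ⟨a, ha⟩
    exact ⟨_, isGreatest_pathSums_add_zero_one ha h1⟩
  · rintro y - ⟨b, hb⟩ ⟨a, ha⟩
    exact ⟨_, isGreatest_pathSums_add_one_one ha hb⟩

theorem isGreatest_lppG (h : o ≤ y) : IsGreatest (pathSums ω o y) (lppG ω o y) := by
  obtain ⟨a, ha⟩ := exists_isGreatest_pathSums h
  rwa [lppG_eq_sSup_pathSums, ha.csSup_eq]

end pathSums

section lppG

variable {ω : ℤ × ℤ → ℝ} {o y : ℤ × ℤ}

theorem lppG_self : lppG ω o o = ω o := by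
  rw [lppG_eq_sSup_pathSums, pathSums_self, csSup_singleton]

theorem lppG_add_one_zero (h : o ≤ y) (h2 : y.2 = o.2) :
    lppG ω o (y + (1, 0)) = lppG ω o y + ω (y + (1, 0)) :=
  (isGreatest_pathSums_add_one_zero (isGreatest_lppG h) h2).csSup_eq

theorem lppG_add_zero_one (h : o ≤ y) (h1 : y.1 = o.1) :
    lppG ω o (y + (0, 1)) = lppG ω o y + ω (y + (0, 1)) :=
  (isGreatest_pathSums_add_zero_one (isGreatest_lppG h) h1).csSup_eq

theorem lppG_add_one_one (h : o ≤ y) :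
    lppG ω o (y + (1, 1)) =
      max (lppG ω o (y + (0, 1))) (lppG ω o (y + (1, 0))) + ω (y + (1, 1)) := by
  have h₀₁ : o ≤ y + (0, 1) := h.trans (le_add_of_nonneg_right (by simp [Prod.le_def]))
  have h₁₀ : o ≤ y + (1, 0) := h.trans (le_add_of_nonneg_right (by simp [Prod.le_def]))
  exact (isGreatest_pathSums_add_one_one (isGreatest_lppG h₀₁) (isGreatest_lppG h₁₀)).csSup_eq

end lppG

section inducedWt

variable {ω : ℤ × ℤ → ℝ} {u v y : ℤ × ℤ}

theorem inducedWt_self : inducedWt ω u v v = 0 := if_pos rfl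

theorem inducedWt_add_one_zero (h : v ≤ y) (h2 : y.2 = v.2) :
    inducedWt ω u v (y + (1, 0)) = lppG ω u (y + (1, 0)) - lppG ω u y := by
  have := Prod.le_def.1 h
  rw [inducedWt, if_neg, if_pos, add_sub_cancel_right]
  all_goals simp [Prod.ext_iff]; omega

theorem inducedWt_add_zero_one (h : v ≤ y) (h1 : y.1 = v.1) :
    inducedWt ω u v (y + (0, 1)) = lppG ω u (y + (0, 1)) - lppG ω u y := by
  have := Prod.le_def.1 h
  rw [inducedWt, if_neg, if_neg, if_pos, add_sub_cancel_right]
  all_goals simp [Prod.ext_iff]; omega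

theorem inducedWt_add_one_one (h : v ≤ y) : inducedWt ω u v (y + (1, 1)) = ω (y + (1, 1)) := by
  have := Prod.le_def.1 h
  rw [inducedWt, if_neg, if_neg, if_neg]
  all_goals simp [Prod.ext_iff]; omega

end inducedWt

/-- Decomposition over an intermediate point: for `u ≤ v ≤ y`,
`G_{u,y} = G_{u,v} + G^{[u]}_{v,y}`. -/
theorem lpp_decomposition (ω : ℤ × ℤ → ℝ) (u v y : ℤ × ℤ)
    (huv : u ≤ v) (hvy : v ≤ y) :
    lppG ω u y = lppG ω u v + lppG (inducedWt ω u v) v y := by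
  refine quadrant_induction ?_ ?_ ?_ ?_ hvy
  · rw [lppG_self, inducedWt_self, add_zero]
  · intro y hy h2 ih
    rw [lppG_add_one_zero hy h2, inducedWt_add_one_zero hy h2]
    linarith
  · intro y hy h1 ih
    rw [lppG_add_zero_one hy h1, inducedWt_add_zero_one hy h1]
    linarith
  · intro y hy ih₁₀ ih₀₁
    rw [lppG_add_one_one (huv.trans hy), lppG_add_one_one hy, inducedWt_add_one_one hy, ih₁₀, ih₀₁,
      max_add_add_left, add_assoc]
end

section
/- (Queueing associativity / interchange identity.) Let a, b, s be bi-infinite real sequences for which the queueing operator D is well-defined (i.e. the relevant sups are attained at finite indices). Then D(D(b, a), s) = D(D(b, R(a, s)), D(a, s)), where D is the inter-departure map and R the dual-service map of the infinite-capacity single-server queue. -/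
/-- Cumulative sums of a bi-infinite sequence, normalized so `cum a 0 = 0`
and `cum a j - cum a (j-1) = a j` for all `j`. -/
noncomputable def cum (a : ℤ → ℝ) (j : ℤ) : ℝ :=
  if 0 ≤ j then ∑ i ∈ Finset.Icc 1 j, a i else -∑ i ∈ Finset.Icc (j + 1) 0, a i

/-- The set whose supremum gives `G̃_j = sup_{k ≤ j} { G_k + Σ_{i=k}^j s_i }`,
where `G = cum a` is an antiderivative of the inter-arrival sequence `a`. -/
def gtSet (a s : ℤ → ℝ) (j : ℤ) : Set ℝ :=
  { v | ∃ k ≤ j, v = cum a k + ∑ i ∈ Finset.Icc k j, s i }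

/-- `G̃_j`, the departure time process of the queue with arrivals `a` and services `s`. -/
noncomputable def queueGt (a s : ℤ → ℝ) (j : ℤ) : ℝ := sSup (gtSet a s j)

/-- Inter-departure process `D(a,s)`. -/
noncomputable def queueD (a s : ℤ → ℝ) (j : ℤ) : ℝ :=
  queueGt a s j - queueGt a s (j - 1)

/-- Sojourn process `S(a,s)`. -/
noncomputable def queueT (a s : ℤ → ℝ) (j : ℤ) : ℝ := queueGt a s j - cum a j

/-- Dual service process `R(a,s)`. -/
noncomputable def queueR (a s : ℤ → ℝ) (j : ℤ) : ℝ :=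
  min (a j) (queueT a s (j - 1))

/-- The queueing operators are well-defined for the input pair `(a,s)`:
each supremum defining `G̃_j` is attained at some finite index. -/
def QWellDef (a s : ℤ → ℝ) : Prop := ∀ j : ℤ, ∃ v, IsGreatest (gtSet a s j) v

/- ## auxiliary lemmas -/

lemma sum_top (f : ℤ → ℝ) (k j : ℤ) (h : k ≤ j) :
    ∑ i ∈ Finset.Icc k j, f i = (∑ i ∈ Finset.Icc k (j-1), f i) + f j := by
  have hins : Finset.Icc k j = insert j (Finset.Icc k (j-1)) := by
    ext i; simp only [Finset.mem_Icc, Finset.mem_insert]; omega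
  rw [hins, Finset.sum_insert (by simp only [Finset.mem_Icc]; omega)]; ring

lemma sum_bot (f : ℤ → ℝ) (k j : ℤ) (h : k ≤ j) :
    ∑ i ∈ Finset.Icc k j, f i = f k + ∑ i ∈ Finset.Icc (k+1) j, f i := by
  have hins : Finset.Icc k j = insert k (Finset.Icc (k+1) j) := by
    ext i; simp only [Finset.mem_Icc, Finset.mem_insert]; omega
  rw [hins, Finset.sum_insert (by simp only [Finset.mem_Icc]; omega)]

lemma cum_diff (a : ℤ → ℝ) (j : ℤ) : cum a j - cum a (j-1) = a j := by
  unfold cum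
  by_cases h : 0 ≤ j
  · by_cases h' : 0 ≤ j - 1
    · rw [if_pos h, if_pos h', sum_top a 1 j (by omega)]; ring
    · have hj : j = 0 := by omega
      subst hj
      rw [if_pos le_rfl, if_neg (by omega),
        show (0:ℤ) - 1 + 1 = 0 by ring, Finset.Icc_self, Finset.sum_singleton,
        show Finset.Icc (1:ℤ) 0 = ∅ from Finset.Icc_eq_empty (by omega)]
      simp
  · rw [if_neg h, if_neg (by omega), show j - 1 + 1 = j by ring,
      sum_bot a j 0 (by omega)]
    ring

lemma sum_Icc_cum (a : ℤ → ℝ) (k : ℤ) : ∀ j : ℤ, k - 1 ≤ j →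
    ∑ i ∈ Finset.Icc k j, a i = cum a j - cum a (k-1) := by
  refine Int.le_induction ?_ ?_
  · rw [show Finset.Icc k (k-1) = ∅ from Finset.Icc_eq_empty (by omega)]
    simp
  · intro n hn ih
    have h2 := cum_diff a (n+1)
    rw [show n + 1 - 1 = n by ring] at h2
    rw [sum_top a k (n+1) (by omega), show n + 1 - 1 = n by ring, ih]
    linarith

lemma cum_of_diff (g d : ℤ → ℝ) (hd : ∀ j, d j = g j - g (j-1)) :
    ∀ j, cum d j = g j - g 0 := by
  intro j
  induction j using Int.induction_on with
  | zero =>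
      rw [show cum d 0 = ∑ i ∈ Finset.Icc 1 0, d i from if_pos le_rfl,
        show Finset.Icc (1:ℤ) 0 = ∅ from Finset.Icc_eq_empty (by omega)]
      simp
  | succ i ih =>
      have h2 := cum_diff d (i+1)
      rw [show (i:ℤ) + 1 - 1 = (i:ℤ) by ring] at h2
      have h3 := hd ((i:ℤ)+1)
      rw [show (i:ℤ) + 1 - 1 = (i:ℤ) by ring] at h3
      linarith
  | pred i ih =>
      have h2 := cum_diff d (-(i:ℤ))
      have h3 := hd (-(i:ℤ))
      rw [show -(i:ℤ) - 1 = -(i:ℤ) - 1 by ring] at h2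
      linarith

lemma queueGt_isGreatest (a s : ℤ → ℝ) (h : QWellDef a s) (j : ℤ) :
    IsGreatest (gtSet a s j) (queueGt a s j) := by
  obtain ⟨v, hv⟩ := h j
  rw [queueGt, hv.csSup_eq]
  exact hv

lemma queueGt_rec (a s : ℤ → ℝ) (h : QWellDef a s) (j : ℤ) :
    queueGt a s j = max (queueGt a s (j-1)) (cum a j) + s j := by
  have hj := queueGt_isGreatest a s h j
  have hj' := queueGt_isGreatest a s h (j-1)
  apply le_antisymm
  · obtain ⟨k, hk, hv⟩ := hj.1
    rcases eq_or_lt_of_le hk with rfl | hlt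
    · rw [hv, Finset.Icc_self, Finset.sum_singleton]
      exact add_le_add (le_max_right _ _) le_rfl
    · have hmem : cum a k + ∑ i ∈ Finset.Icc k (j-1), s i ∈ gtSet a s (j-1) :=
        ⟨k, by omega, rfl⟩
      have hle := hj'.2 hmem
      rw [hv, sum_top s k j hk]
      have := le_max_left (queueGt a s (j-1)) (cum a j)
      linarith
  · have hA : cum a j + s j ≤ queueGt a s j := by
      refine hj.2 ⟨j, le_rfl, ?_⟩
      rw [Finset.Icc_self, Finset.sum_singleton]
    have hQ : queueGt a s (j-1) + s j ≤ queueGt a s j := by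
      obtain ⟨k, hk, hv⟩ := hj'.1
      have hmem : cum a k + ∑ i ∈ Finset.Icc k j, s i ∈ gtSet a s j := ⟨k, by omega, rfl⟩
      have hle := hj.2 hmem
      rw [sum_top s k j (by omega)] at hle
      rw [hv]; linarith
    rw [← max_add_add_right]
    exact max_le hQ hA

/- ## abstract lemmas about the workload recursion -/

lemma Wrec_mono {F W : ℤ → ℝ} (h : ∀ k, W k = max (W (k-1)) (F k))
    {k l : ℤ} (hkl : k ≤ l) : W k ≤ W l := by
  have key : ∀ l : ℤ, k ≤ l → W k ≤ W l := by
    refine Int.le_induction ?_ ?_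
    · exact le_rfl
    · intro n hn ih
      refine ih.trans ?_
      rw [h (n+1), show n + 1 - 1 = n by ring]
      exact le_max_left _ _
  exact key l hkl

lemma Wrec_const {F W : ℤ → ℝ} (h : ∀ k, W k = max (W (k-1)) (F k))
    {k l : ℤ} (hkl : k ≤ l) (hb : ∀ i, k < i → i ≤ l → F i ≤ W k) : W l = W k := by
  have key : ∀ l : ℤ, k ≤ l → ((∀ i, k < i → i ≤ l → F i ≤ W k) → W l = W k) := by
    refine Int.le_induction ?_ ?_
    · intro _; rfl
    · intro n hn ih hb'
      rw [h (n+1), show n + 1 - 1 = n by ring, ih (fun i h1 h2 => hb' i h1 (by omega))]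
      exact max_eq_left (hb' (n+1) (by omega) le_rfl)
  exact key l hkl hb

lemma Wrec_bound {F W : ℤ → ℝ} (h : ∀ k, W k = max (W (k-1)) (F k))
    {M : ℝ} {k l : ℤ} (hkl : k ≤ l) (hb : ∀ i, k < i → i ≤ l → F i ≤ M) :
    W l ≤ max (W k) M := by
  have key : ∀ l : ℤ, k ≤ l → ((∀ i, k < i → i ≤ l → F i ≤ M) → W l ≤ max (W k) M) := by
    refine Int.le_induction ?_ ?_
    · intro _; exact le_max_left _ _
    · intro n hn ih hb'
      rw [h (n+1), show n + 1 - 1 = n by ring]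
      exact max_le (ih fun i h1 h2 => hb' i h1 (by omega))
        (le_trans (hb' (n+1) (by omega) le_rfl) (le_max_right _ _))
  exact key l hkl hb

/-- Abstract form of the interchange argument.  `Wn` is the workload of the
inner queue, `Fn k = A k - S (k-1)`, `C m = B m - A (m-1) + S j`. -/
lemma abstract_interchange (Fn Wn : ℤ → ℝ)
    (hrec : ∀ k, Wn k = max (Wn (k-1)) (Fn k))
    (X Y : ℝ) (j : ℤ) (C : ℤ → ℝ)
    (hXub : ∀ m k, m ≤ k → k ≤ j → C m + Fn k ≤ X)
    (hYub : ∀ m k, m ≤ k → k ≤ j →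
      C m + Fn k + Wn j + Wn (m-1) - Wn k - Wn (k-1) ≤ Y)
    (hXmem : ∃ m k, m ≤ k ∧ k ≤ j ∧ X = C m + Fn k)
    (hYmem : ∃ m k, m ≤ k ∧ k ≤ j ∧
      Y = C m + Fn k + Wn j + Wn (m-1) - Wn k - Wn (k-1)) :
    X = Y := by
  classical
  have hFle : ∀ k, Fn k ≤ Wn k := fun k => (hrec k) ▸ le_max_right _ _
  apply le_antisymm
  · obtain ⟨m, k, hmk, hkj, hXeq⟩ := hXmem
    by_cases hc : ∃ l, m ≤ l ∧ l ≤ j ∧ Wn (m-1) < Fn l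
    · obtain ⟨l0, hl1, hl2, hl3⟩ := hc
      have hTne : ((Finset.Icc m j).filter (fun l => Wn (m-1) < Fn l)).Nonempty := by
        refine ⟨l0, ?_⟩
        rw [Finset.mem_filter, Finset.mem_Icc]
        exact ⟨⟨hl1, hl2⟩, hl3⟩
      obtain ⟨⟨hmk', hk'j⟩, hFk'⟩ :
          (m ≤ ((Finset.Icc m j).filter (fun l => Wn (m-1) < Fn l)).min' hTne ∧
            ((Finset.Icc m j).filter (fun l => Wn (m-1) < Fn l)).min' hTne ≤ j) ∧
          Wn (m-1) < Fn (((Finset.Icc m j).filter (fun l => Wn (m-1) < Fn l)).min' hTne) := by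
        have h := Finset.min'_mem _ hTne
        rw [Finset.mem_filter, Finset.mem_Icc] at h
        exact h
      set k' := ((Finset.Icc m j).filter (fun l => Wn (m-1) < Fn l)).min' hTne with hk'
      have hmin : ∀ i, m ≤ i → i < k' → Fn i ≤ Wn (m-1) := by
        intro i hi1 hi2
        by_contra hcon
        push_neg at hcon
        have hiT : i ∈ (Finset.Icc m j).filter (fun l => Wn (m-1) < Fn l) := by
          rw [Finset.mem_filter, Finset.mem_Icc]
          exact ⟨⟨hi1, by omega⟩, hcon⟩
        have := Finset.min'_le _ i hiT
        omega
      have hWk'1 : Wn (k'-1) = Wn (m-1) :=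
        Wrec_const hrec (by omega) (fun i hi1 hi2 => hmin i (by omega) (by omega))
      have hWk' : Wn k' = Fn k' := by
        rw [hrec k', hWk'1]
        exact max_eq_right hFk'.le
      have hY := hYub m k' hmk' hk'j
      have h1 : Fn k ≤ Wn j := (hFle k).trans (Wrec_mono hrec hkj)
      rw [hXeq]; linarith
    · push_neg at hc
      have hWj : Wn j = Wn (m-1) :=
        Wrec_const hrec (by omega) (fun i hi1 hi2 => hc i (by omega) hi2)
      have hWk : Wn k = Wn (m-1) :=
        Wrec_const hrec (by omega) (fun i hi1 hi2 => hc i (by omega) (by omega))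
      have hWk1 : Wn (k-1) = Wn (m-1) :=
        Wrec_const hrec (by omega) (fun i hi1 hi2 => hc i (by omega) (by omega))
      have := hYub m k hmk hkj
      rw [hXeq]; linarith
  · obtain ⟨m, k, hmk, hkj, hYeq⟩ := hYmem
    have hb : ∀ i, k < i → i ≤ j → Fn i ≤ X - C m := by
      intro i hi1 hi2
      have := hXub m i (by omega) hi2
      linarith
    have hWj := Wrec_bound hrec hkj hb
    have hXk := hXub m k hmk hkj
    have h1 : Wn (m-1) ≤ Wn (k-1) := Wrec_mono hrec (by omega)
    have h2 := hFle k
    rcases max_cases (Wn k) (X - C m) with ⟨hm, _⟩ | ⟨hm, _⟩ <;> rw [hm] at hWj <;>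
      · rw [hYeq]; linarith

lemma main_claim (b a s : ℤ → ℝ)
    (h1 : QWellDef b a) (h2 : QWellDef a s)
    (h3 : QWellDef (queueD b a) s)
    (h4 : QWellDef b (queueR a s))
    (h5 : QWellDef (queueD b (queueR a s)) (queueD a s)) (j : ℤ) :
    queueGt (queueD b a) s j + queueGt b a 0
      = queueGt (queueD b (queueR a s)) (queueD a s) j + queueGt b (queueR a s) 0 := by
  have hUg := queueGt_isGreatest b a h1
  have hVg := queueGt_isGreatest a s h2
  have hXg := queueGt_isGreatest (queueD b a) s h3
  have hPg := queueGt_isGreatest b (queueR a s) h4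
  have hYg := queueGt_isGreatest (queueD b (queueR a s)) (queueD a s) h5
  have hcum1 : ∀ k, cum (queueD b a) k = queueGt b a k - queueGt b a 0 :=
    cum_of_diff _ _ (fun _ => rfl)
  have hcumd : ∀ k, cum (queueD a s) k = queueGt a s k - queueGt a s 0 :=
    cum_of_diff _ _ (fun _ => rfl)
  have hcum2 : ∀ k, cum (queueD b (queueR a s)) k
      = queueGt b (queueR a s) k - queueGt b (queueR a s) 0 :=
    cum_of_diff _ _ (fun _ => rfl)
  have hVrec := queueGt_rec a s h2
  -- the workload recursion
  have hWrec : ∀ k : ℤ, queueGt a s k - cum s k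
      = max (queueGt a s (k-1) - cum s (k-1)) (cum a k - cum s (k-1)) := by
    intro k
    rw [hVrec k, max_sub_sub_right,
      show s k = cum s k - cum s (k-1) from (by linarith [cum_diff s k])]
    ring
  -- dual service identity: š i = a i + s i - ď i
  have hsv : ∀ i : ℤ, queueR a s i = a i + s i - queueD a s i := by
    intro i
    have hai := cum_diff a i
    have hVi := hVrec i
    have hminmax := min_add_max (cum a i) (queueGt a s (i-1))
    have hmaxc : max (cum a i) (queueGt a s (i-1)) = max (queueGt a s (i-1)) (cum a i) :=
      max_comm _ _
    have hmins : min (a i) (queueGt a s (i-1) - cum a (i-1))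
        = min (cum a i) (queueGt a s (i-1)) - cum a (i-1) := by
      rw [← min_sub_sub_right]
      congr 1
      linarith
    rw [queueR, queueT, queueD, hmins]
    linarith
  -- cumulative dual services
  have hSc : ∀ m k : ℤ, m - 1 ≤ k →
      cum (queueR a s) k - cum (queueR a s) (m-1)
        = (cum a k - cum a (m-1)) + (cum s k - cum s (m-1))
          - (queueGt a s k - queueGt a s (m-1)) := by
    intro m k hmk
    have e1 := sum_Icc_cum (queueR a s) m k hmk
    have e2 : ∑ i ∈ Finset.Icc m k, queueR a s i
        = ∑ i ∈ Finset.Icc m k, (a i + s i - queueD a s i) :=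
      Finset.sum_congr rfl (fun i _ => hsv i)
    rw [Finset.sum_sub_distrib, Finset.sum_add_distrib] at e2
    have e3 := sum_Icc_cum a m k hmk
    have e4 := sum_Icc_cum s m k hmk
    have e5 := sum_Icc_cum (queueD a s) m k hmk
    have e6 := hcumd k
    have e7 := hcumd (m-1)
    linarith
  -- instantiate the abstract lemma
  refine abstract_interchange
    (fun k => cum a k - cum s (k-1)) (fun k => queueGt a s k - cum s k) hWrec
    _ _ j (fun m => cum b m - cum a (m-1) + cum s j) ?_ ?_ ?_ ?_
  · -- upper bounds for X
    intro m k hmk hkj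
    beta_reduce
    have hm1 : cum b m + (cum a k - cum a (m-1)) ∈ gtSet b a k :=
      ⟨m, hmk, by rw [sum_Icc_cum a m k (by omega)]⟩
    have hU := (hUg k).2 hm1
    have hm2 : (queueGt b a k - queueGt b a 0) + (cum s j - cum s (k-1))
        ∈ gtSet (queueD b a) s j :=
      ⟨k, hkj, by rw [sum_Icc_cum s k j (by omega), hcum1 k]⟩
    have hX := (hXg j).2 hm2
    linarith
  · -- upper bounds for Y
    intro m k hmk hkj
    beta_reduce
    have hm1 : cum b m + ∑ i ∈ Finset.Icc m k, queueR a s i ∈ gtSet b (queueR a s) k :=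
      ⟨m, hmk, rfl⟩
    have hP := (hPg k).2 hm1
    have hm2 : (queueGt b (queueR a s) k - queueGt b (queueR a s) 0)
        + ∑ i ∈ Finset.Icc k j, queueD a s i
        ∈ gtSet (queueD b (queueR a s)) (queueD a s) j :=
      ⟨k, hkj, by rw [hcum2 k]⟩
    have hY := (hYg j).2 hm2
    have hs1 := sum_Icc_cum (queueR a s) m k (by omega)
    have hs2 := sum_Icc_cum (queueD a s) k j (by omega)
    have hS := hSc m k (by omega)
    have e6 := hcumd j
    have e7 := hcumd (k-1)
    linarith
  · -- membership for X
    obtain ⟨k, hkj, hXv⟩ := (hXg j).1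
    obtain ⟨m, hmk, hUv⟩ := (hUg k).1
    refine ⟨m, k, hmk, hkj, ?_⟩
    beta_reduce
    have e1 := hcum1 k
    have e2 := sum_Icc_cum s k j (by omega)
    have e3 := sum_Icc_cum a m k (by omega)
    rw [e2] at hXv
    rw [e3] at hUv
    linarith
  · -- membership for Y
    obtain ⟨k, hkj, hYv⟩ := (hYg j).1
    obtain ⟨m, hmk, hPv⟩ := (hPg k).1
    refine ⟨m, k, hmk, hkj, ?_⟩
    beta_reduce
    have e1 := hcum2 k
    have e2 := sum_Icc_cum (queueD a s) k j (by omega)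
    have e3 := sum_Icc_cum (queueR a s) m k (by omega)
    have hS := hSc m k (by omega)
    have e6 := hcumd j
    have e7 := hcumd (k-1)
    rw [e2] at hYv
    rw [e3] at hPv
    linarith


/-- Queueing associativity / interchange identity:
`D(D(b, a), s) = D(D(b, R(a, s)), D(a, s))` whenever the operations are well-defined. -/
theorem queue_associativity (b a s : ℤ → ℝ)
    (h1 : QWellDef b a) (h2 : QWellDef a s)
    (h3 : QWellDef (queueD b a) s)
    (h4 : QWellDef b (queueR a s))
    (h5 : QWellDef (queueD b (queueR a s)) (queueD a s)) :
    queueD (queueD b a) s = queueD (queueD b (queueR a s)) (queueD a s) := by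
  funext j
  have hc1 := main_claim b a s h1 h2 h3 h4 h5 j
  have hc2 := main_claim b a s h1 h2 h3 h4 h5 (j-1)
  simp only [queueD]
  linarith
end

section
/- (Cumulative idle time formula.) Consider a single-server queue with inter-arrival times (a_j) and service times (s_j), waiting times w_j = sup_{i≤j} ( Σ_{k=i}^{j} (s_{k−1} − a_k) )⁺ satisfying the Lindley recursion w_j = (w_{j−1} + s_{j−1} − a_j)⁺, and idle times e_j = (w_{j−1} + s_{j−1} − a_j)⁻. Then for any k ≤ l, Σ_{i=k}^{l} e_i = ( min_{k ≤ i ≤ l} ( w_{k−1} + S^{k,i} ) )⁻, where S^{k,i} = Σ_{m=k}^{i} (s_{m−1} − a_m). -/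
private lemma key_minmax (m A : ℝ) :
    max (-m) 0 + max (-(A + max (-m) 0)) 0 = max (-(min m A)) 0 := by
  rcases le_total 0 m with hm | hm
  · rw [max_eq_right (by linarith : -m ≤ (0:ℝ))]
    rcases le_total m A with h | h
    · rw [min_eq_left h, max_eq_right (by linarith : -m ≤ (0:ℝ)),
        max_eq_right (by linarith : -(A + 0) ≤ (0:ℝ))]
      ring
    · rw [min_eq_right h]
      ring_nf
  · rw [max_eq_left (by linarith : (0:ℝ) ≤ -m)]
    rcases le_total m A with h | h
    · rw [min_eq_left h, max_eq_left (by linarith : (0:ℝ) ≤ -m),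
        max_eq_right (by linarith : -(A + -m) ≤ (0:ℝ))]
      ring
    · rw [min_eq_right h, max_eq_left (by linarith : (0:ℝ) ≤ -(A + -m)),
        max_eq_left (by linarith : (0:ℝ) ≤ -A)]
      ring

private lemma Icc_int_succ (k l : ℤ) (h : k ≤ l) :
    Finset.Icc k (l + 1) = insert (l + 1) (Finset.Icc k l) := by
  ext i
  simp only [Finset.mem_Icc, Finset.mem_insert]
  omega

private lemma cumulative_idle_aux (x w e : ℤ → ℝ) (k : ℤ) : ∀ n : ℕ,
    (∀ j ∈ Finset.Icc k (k + n), w j = max (w (j - 1) + x j) 0) →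
    (∀ j ∈ Finset.Icc k (k + n), e j = max (-(w (j - 1) + x j)) 0) →
    (∑ i ∈ Finset.Icc k (k + n), e i =
      max (-((Finset.Icc k (k + n)).inf' (Finset.nonempty_Icc.mpr (by omega))
        (fun i => w (k - 1) + ∑ m ∈ Finset.Icc k i, x m))) 0) ∧
    w (k + n) = w (k - 1) + ∑ m ∈ Finset.Icc k (k + n), x m
        + ∑ i ∈ Finset.Icc k (k + n), e i := by
  intro n
  induction n with
  | zero =>
    intro hrec he
    simp only [Nat.cast_zero, add_zero] at *
    have hk : k ∈ Finset.Icc k k := by simp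
    have h1 := hrec k hk
    have h2 := he k hk
    simp only [Finset.Icc_self, Finset.sum_singleton, Finset.inf'_singleton]
    refine ⟨h2, ?_⟩
    rw [h1, h2]
    rcases le_total 0 (w (k - 1) + x k) with h | h
    · rw [max_eq_left h, max_eq_right (by linarith)]; ring
    · rw [max_eq_right h, max_eq_left (by linarith)]; ring
  | succ n ih =>
    intro hrec he
    have hc : k + ((n : ℤ) + 1) = (k + n) + 1 := by ring
    simp only [Nat.cast_add, Nat.cast_one, hc] at *
    set l : ℤ := k + n with hldef
    have hl : k ≤ l := by omega
    have hsub : Finset.Icc k l ⊆ Finset.Icc k (l + 1) :=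
      Finset.Icc_subset_Icc_right (by omega)
    obtain ⟨IH1, IH2⟩ := ih (fun j hj => hrec j (hsub hj)) (fun j hj => he j (hsub hj))
    have hins := Icc_int_succ k l hl
    have hnot : (l + 1) ∉ Finset.Icc k l := by simp
    have hsum : ∀ f : ℤ → ℝ, ∑ i ∈ Finset.Icc k (l + 1), f i
        = ∑ i ∈ Finset.Icc k l, f i + f (l + 1) := by
      intro f; rw [hins, Finset.sum_insert hnot]; ring
    have hmem : l + 1 ∈ Finset.Icc k (l + 1) := by simp; omega
    have he1 := he (l + 1) hmem
    have hr1 := hrec (l + 1) hmem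
    set M := (Finset.Icc k l).inf' (Finset.nonempty_Icc.mpr hl)
        (fun i => w (k - 1) + ∑ m ∈ Finset.Icc k i, x m) with hM
    have hinf : (Finset.Icc k (l + 1)).inf' (Finset.nonempty_Icc.mpr (by omega))
        (fun i => w (k - 1) + ∑ m ∈ Finset.Icc k i, x m)
        = min (w (k - 1) + ∑ m ∈ Finset.Icc k (l + 1), x m) M := by
      simp only [hins]
      rw [Finset.inf'_insert (Finset.nonempty_Icc.mpr hl), ← hins]
    have hA : w l + x (l + 1)
        = (w (k - 1) + ∑ m ∈ Finset.Icc k (l + 1), x m) + max (-M) 0 := by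
      rw [IH2, ← IH1, hsum x]; ring
    have hll : l + 1 - 1 = l := by ring
    constructor
    · rw [hsum e, IH1, he1, hinf, min_comm, hll, hA]
      exact key_minmax M (w (k - 1) + ∑ m ∈ Finset.Icc k (l + 1), x m)
    · rw [hsum e, hsum x, hr1, he1, hll]
      rcases le_total 0 (w l + x (l + 1)) with h | h
      · rw [max_eq_left h, max_eq_right (by linarith)]
        rw [IH2]; ring
      · rw [max_eq_right h, max_eq_left (by linarith)]
        rw [IH2]; ring

/-- Cumulative idle time formula: if the waiting times `w` satisfy the Lindley
recursion `w_j = (w_{j-1} + x_j)⁺` on `[k,l]` with `w_{k-1} ≥ 0`, and the idle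
times are `e_j = (w_{j-1} + x_j)⁻`, then
`Σ_{i=k}^l e_i = (min_{k≤i≤l} (w_{k-1} + Σ_{m=k}^i x_m))⁻`. -/
theorem cumulative_idle_time (x w e : ℤ → ℝ) (k l : ℤ) (hkl : k ≤ l)
    (hw0 : 0 ≤ w (k - 1))
    (hrec : ∀ j ∈ Finset.Icc k l, w j = max (w (j - 1) + x j) 0)
    (he : ∀ j ∈ Finset.Icc k l, e j = max (-(w (j - 1) + x j)) 0) :
    ∑ i ∈ Finset.Icc k l, e i =
      max (-((Finset.Icc k l).inf' (Finset.nonempty_Icc.mpr hkl)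
        (fun i => w (k - 1) + ∑ m ∈ Finset.Icc k i, x m))) 0 := by
  obtain ⟨n, rfl⟩ : ∃ n : ℕ, l = k + n := ⟨(l - k).toNat, by omega⟩
  exact (cumulative_idle_aux x w e k n hrec he).1
end

section
/- (Emptying probability is positive-event equivalence.) In the single-server queue with waiting times w_j and idle times e_j, for any M ≥ 1: Σ_{i=1}^{M} e_i > 0 if and only if w₀ + min_{1 ≤ i ≤ M} S^{1,i} < 0, where S^{1,i} = Σ_{j=1}^{i}(s_{j−1} − a_j). -/
/-- Emptying in `M` steps is equivalent to the walk dipping below `-w₀`: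
with `w_j = (w_{j-1}+x_j)⁺`, `e_j = (w_{j-1}+x_j)⁻` and `S^{1,i} = Σ_{j=1}^i x_j`,
`Σ_{i=1}^M e_i > 0 ↔ w₀ + min_{1≤i≤M} S^{1,i} < 0`. -/
theorem idle_time_positive_iff (x w e : ℕ → ℝ) (M : ℕ) (hM : 1 ≤ M)
    (h0 : 0 ≤ w 0)
    (hrec : ∀ j ∈ Finset.Icc 1 M, w j = max (w (j - 1) + x j) 0)
    (he : ∀ j ∈ Finset.Icc 1 M, e j = max (-(w (j - 1) + x j)) 0) :
    0 < ∑ i ∈ Finset.Icc 1 M, e i ↔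
      w 0 + (Finset.Icc 1 M).inf' (Finset.nonempty_Icc.mpr hM)
        (fun i => ∑ j ∈ Finset.Icc 1 i, x j) < 0 := by
  set S : ℕ → ℝ := fun i => ∑ j ∈ Finset.Icc 1 i, x j with hSdef
  -- If no idling up to j, then w j equals w 0 + S j
  have hA : ∀ j, j ≤ M → (∀ k ∈ Finset.Icc 1 j, e k = 0) → w j = w 0 + S j := by
    intro j
    induction j with
    | zero => intro _ _; simp [hSdef]
    | succ n ih =>
      intro hle hz
      have hn : n ≤ M := Nat.le_of_succ_le hle
      have hmem : n + 1 ∈ Finset.Icc 1 M := by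
        simp only [Finset.mem_Icc]; omega
      have hz' : ∀ k ∈ Finset.Icc 1 n, e k = 0 := by
        intro k hk
        exact hz k (by simp only [Finset.mem_Icc] at hk ⊢; omega)
      have hwn := ih hn hz'
      have he1 := he (n + 1) hmem
      have hz1 := hz (n + 1) (by simp only [Finset.mem_Icc]; omega)
      rw [he1] at hz1
      simp only [Nat.add_sub_cancel] at hz1
      have hpos : 0 ≤ w n + x (n + 1) := by
        have : -(w n + x (n + 1)) ≤ 0 := by
          by_contra h
          push_neg at h
          have := le_max_left (-(w n + x (n + 1))) (0 : ℝ)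
          rw [hz1] at this
          linarith
        linarith
      have hw1 := hrec (n + 1) hmem
      simp only [Nat.add_sub_cancel] at hw1
      rw [hw1, max_eq_left hpos, hwn]
      have hsum : S (n + 1) = S n + x (n + 1) := by
        simp only [hSdef]
        exact Finset.sum_Icc_succ_top (by omega) x
      rw [hsum]; ring
  -- If the walk never dips below -w0, no idling occurs
  have hB : (∀ i ∈ Finset.Icc 1 M, 0 ≤ w 0 + S i) →
      ∀ j, j ≤ M → w j = w 0 + S j ∧ ∀ k ∈ Finset.Icc 1 j, e k = 0 := by
    intro hge j
    induction j with
    | zero => intro _; constructor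
              · simp [hSdef]
              · intro k hk; exact absurd hk (by simp)
    | succ n ih =>
      intro hle
      have hn : n ≤ M := Nat.le_of_succ_le hle
      obtain ⟨hwn, hzn⟩ := ih hn
      have hmem : n + 1 ∈ Finset.Icc 1 M := by
        simp only [Finset.mem_Icc]; omega
      have hsum : S (n + 1) = S n + x (n + 1) := by
        simp only [hSdef]
        exact Finset.sum_Icc_succ_top (by omega) x
      have hpos : 0 ≤ w n + x (n + 1) := by
        have := hge (n + 1) hmem
        rw [hsum] at this
        linarith [hwn]
      have hw1 := hrec (n + 1) hmem
      have he1 := he (n + 1) hmem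
      simp only [Nat.add_sub_cancel] at hw1 he1
      constructor
      · rw [hw1, max_eq_left hpos, hwn, hsum]; ring
      · intro k hk
        simp only [Finset.mem_Icc] at hk
        rcases Nat.lt_or_ge k (n + 1) with h | h
        · exact hzn k (by simp only [Finset.mem_Icc]; omega)
        · have : k = n + 1 := by omega
          subst this
          rw [he1, max_eq_right (by linarith)]
  constructor
  · intro hsum
    by_contra hmin
    push_neg at hmin
    have hge : ∀ i ∈ Finset.Icc 1 M, 0 ≤ w 0 + S i := by
      intro i hi
      have := Finset.inf'_le (b := i) (fun i => ∑ j ∈ Finset.Icc 1 i, x j) hi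
      have h2 : w 0 + (Finset.Icc 1 M).inf' (Finset.nonempty_Icc.mpr hM)
          (fun i => ∑ j ∈ Finset.Icc 1 i, x j) ≤ w 0 + S i := by
        simp only [hSdef]; linarith
      linarith
    obtain ⟨_, hz⟩ := hB hge M le_rfl
    rw [Finset.sum_eq_zero hz] at hsum
    exact lt_irrefl 0 hsum
  · intro hmin
    have hnn : ∀ k ∈ Finset.Icc 1 M, 0 ≤ e k := by
      intro k hk; rw [he k hk]; exact le_max_right _ _
    by_contra hsum
    push_neg at hsum
    have hzero : ∀ k ∈ Finset.Icc 1 M, e k = 0 := by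
      have := (Finset.sum_eq_zero_iff_of_nonneg hnn).mp (le_antisymm hsum (Finset.sum_nonneg hnn))
      exact this
    have hlt : (Finset.Icc 1 M).inf' (Finset.nonempty_Icc.mpr hM)
        (fun i => ∑ j ∈ Finset.Icc 1 i, x j) < -(w 0) := by linarith
    obtain ⟨i, hi, hSi⟩ := (Finset.inf'_lt_iff _).mp hlt
    have hiM := (Finset.mem_Icc.mp hi).2
    have hwi := hA i hiM (fun k hk => hzero k
      (by simp only [Finset.mem_Icc] at hk ⊢; omega))
    have hwge : 0 ≤ w i := by
      rw [hrec i hi]; exact le_max_right _ _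
    rw [hwi] at hwge
    simp only [hSdef] at hwge
    linarith
end
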